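/- (Proposition 3) Let n ≥ 1 and let ξ_0 ∈ ℂ with Im ξ_0 > 0 and ξ_0 ≠ 0. For j = 1,…,n set ω_j = ((j−1)π + arg ξ_0)/(n+1), and define the real numbers a_j = (2 Im(ξ_0) csc ω_j / ((n+1)|ξ_0|^{1/2})) · ∏_{i≠j} √( sin ω_i / |sin((i−j)π/(n+1))| ) and b_j = (2 Im(ξ_0)/(n+1))·( cot ω_j + ∑_{i=1}^n cot ω_i ) − 2 Re(ξ_0), and define χ_0 = 2 Re(ξ_0) + (2 Im(ξ_0)/(n+1))·( i − ∑_{i=1}^n cot ω_i ) ∈ ℂ. Then the spectral characteristic polynomial built from these data satisfies D(χ) = (χ − χ_0)^{n+1} in ℂ[χ]; that is, χ_0 is an (n+1)-multiple root of D. -/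

import Mathlib

open scoped BigOperators Real

open Polynomial in
/-- The spectral characteristic polynomial
`D(χ) = (χ - 2ξ₀)·∏_{j=1}^n (χ + b_j) + ξ₀ · ∑_{i=1}^n a_i² · ∏_{j≠i} (χ + b_j)`. -/
noncomputable def Dpoly (n : ℕ) (ξ₀ : ℂ) (a b : Fin n → ℝ) : Polynomial ℂ :=
  (X - C (2 * ξ₀)) * ∏ j, (X + C (b j : ℂ)) +
    C ξ₀ * ∑ i, C ((a i : ℂ) ^ 2) * ∏ j ∈ Finset.univ.erase i, (X + C (b j : ℂ))

/-- `ω_j = ((j-1)π + arg ξ₀)/(n+1)` for `j = 1, …, n` (here indexed by `Fin n`). -/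
noncomputable def omegaProp3 (n : ℕ) (ξ₀ : ℂ) (j : Fin n) : ℝ :=
  ((j : ℝ) * π + Complex.arg ξ₀) / (n + 1)

/-- `a_j = (2 Im(ξ₀) csc ω_j / ((n+1)|ξ₀|^{1/2})) · ∏_{i≠j} √(sin ω_i / |sin((i-j)π/(n+1))|)`. -/
noncomputable def aProp3 (n : ℕ) (ξ₀ : ℂ) (j : Fin n) : ℝ :=
  (2 * ξ₀.im * (Real.sin (omegaProp3 n ξ₀ j))⁻¹) / ((n + 1) * Real.sqrt ‖ξ₀‖) *
    ∏ i ∈ Finset.univ.erase j,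
      Real.sqrt (Real.sin (omegaProp3 n ξ₀ i) /
        |Real.sin (((i : ℝ) - (j : ℝ)) * π / (n + 1))|)

/-- `b_j = (2 Im(ξ₀)/(n+1))·( cot ω_j + ∑_{i=1}^n cot ω_i ) - 2 Re(ξ₀)`. -/
noncomputable def bProp3 (n : ℕ) (ξ₀ : ℂ) (j : Fin n) : ℝ :=
  (2 * ξ₀.im / (n + 1)) *
      (Real.cos (omegaProp3 n ξ₀ j) / Real.sin (omegaProp3 n ξ₀ j) +
        ∑ i, Real.cos (omegaProp3 n ξ₀ i) / Real.sin (omegaProp3 n ξ₀ i)) -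
    2 * ξ₀.re

/-- `χ₀ = 2 Re(ξ₀) + (2 Im(ξ₀)/(n+1))·( i - ∑_{i=1}^n cot ω_i )`. -/
noncomputable def chi0Prop3 (n : ℕ) (ξ₀ : ℂ) : ℂ :=
  (2 * ξ₀.re : ℝ) + ((2 * ξ₀.im / (n + 1) : ℝ) : ℂ) *
    (Complex.I - ((∑ i, Real.cos (omegaProp3 n ξ₀ i) / Real.sin (omegaProp3 n ξ₀ i) : ℝ) : ℂ))

/-!
Write `β = 2 Im ξ₀ / (n + 1)` and `μ_j = χ₀ + b_j = β (cot ω_j + i) = β e^{iω_j} / sin ω_j`.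
The polynomial `Y ^ (n + 1) - (Y - ∑ μ_j) ∏ (Y + μ_j)` has degree `< n`, so Lagrange
interpolation at the distinct nodes `-μ_j` gives
`Y ^ (n + 1) = (Y - ∑ μ_j) ∏ (Y + μ_j) + ∑_i w_i ∏_{j ≠ i} (Y + μ_j)` with
`w_i = (-μ_i) ^ (n + 1) / ∏_{j ≠ i} (μ_j - μ_i)`. Substituting `Y = χ - χ₀` yields `D(χ)` as
soon as `χ₀ + ∑ μ_j = 2 ξ₀` and `w_i = ξ₀ a_i²`. The second identity holds because
`(n + 1) ω_j = jπ + arg ξ₀` (indices `j : Fin n` start at 0) makes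
`μ_j ^ (n + 1) = (-1) ^ j (β / sin ω_j) ^ (n + 1) ξ₀ / |ξ₀|`, while
`μ_j - μ_i = β sin (ω_i - ω_j) / (sin ω_i sin ω_j)`, whose product over `j ≠ i` has sign
`(-1) ^ (n - 1 - i)`: the signs cancel and the moduli are those packed into `a_i`.
-/

open Polynomial Finset

namespace Polynomial

theorem Monic.degree_sub_lt_of_nextCoeff_eq {R : Type*} [Ring R] {f g : R[X]} (hf : f.Monic)
    (hg : g.Monic) (hdeg : f.natDegree = g.natDegree) (hnext : f.nextCoeff = g.nextCoeff) :
    (f - g).degree < (f.natDegree - 1 : ℕ) := by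
  rw [degree_lt_iff_coeff_zero]
  intro m hm
  rw [coeff_sub, sub_eq_zero]
  rcases lt_trichotomy m f.natDegree with hlt | rfl | hgt
  · have hpos : 0 < f.natDegree := by omega
    rw [nextCoeff_of_natDegree_pos hpos, nextCoeff_of_natDegree_pos (hdeg ▸ hpos), ← hdeg]
      at hnext
    rwa [show m = f.natDegree - 1 by omega]
  · rw [hf.coeff_natDegree, hdeg, hg.coeff_natDegree]
  · rw [coeff_eq_zero_of_natDegree_lt hgt, coeff_eq_zero_of_natDegree_lt (hdeg ▸ hgt)]

theorem degree_X_pow_sub_X_sub_C_sum_mul_prod_lt {R ι : Type*} [CommRing R] [Nontrivial R]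
    [Fintype ι] (μ : ι → R) :
    (X ^ (Fintype.card ι + 1) - (X - C (∑ j, μ j)) * ∏ j, (X + C (μ j))).degree <
      (Fintype.card ι : WithBot ℕ) := by
  have hX : ∀ j, (X + C (μ j)).Monic := fun j => monic_X_add_C (μ j)
  have hP : (∏ j, (X + C (μ j))).Monic := monic_prod_of_monic _ _ fun j _ => hX j
  have h := (monic_X_pow (Fintype.card ι + 1)).degree_sub_lt_of_nextCoeff_eq
    ((monic_X_sub_C (∑ j, μ j)).mul hP) ?_ ?_
  · simpa only [natDegree_X_pow, Nat.add_sub_cancel] using h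
  · rw [(monic_X_sub_C _).natDegree_mul hP, natDegree_prod_of_monic _ _ fun j _ => hX j,
      natDegree_X_pow, natDegree_X_sub_C]
    simp [add_comm]
  · rw [(monic_X_sub_C _).nextCoeff_mul hP, nextCoeff_X_sub_C,
      Monic.nextCoeff_prod _ _ fun j _ => hX j]
    simp [nextCoeff, coeff_X_pow]

variable {K ι : Type*} [Field K] [Fintype ι] [DecidableEq ι]

theorem X_pow_card_succ_eq_of_injective {μ : ι → K} (hμ : Function.Injective μ) :
    X ^ (Fintype.card ι + 1) = (X - C (∑ j, μ j)) * ∏ j, (X + C (μ j)) +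
      ∑ i, C ((-μ i) ^ (Fintype.card ι + 1) / ∏ j ∈ univ.erase i, (μ j - μ i)) *
        ∏ j ∈ univ.erase i, (X + C (μ j)) := by
  set R := X ^ (Fintype.card ι + 1) - (X - C (∑ j, μ j)) * ∏ j, (X + C (μ j))
  have hinj : Set.InjOn (fun i => -μ i) (univ : Finset ι) :=
    fun i _ j _ h => hμ (neg_injective h)
  have hR : ∀ i, R.eval (-μ i) = (-μ i) ^ (Fintype.card ι + 1) := by
    intro i
    simp [R, eval_prod, prod_eq_zero (mem_univ i)]
  have hbasis : ∀ i, Lagrange.basis univ (fun i => -μ i) i =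
      C (∏ j ∈ univ.erase i, (μ j - μ i))⁻¹ * ∏ j ∈ univ.erase i, (X + C (μ j)) := by
    intro i
    rw [Lagrange.basis, ← prod_inv_distrib, map_prod, ← prod_mul_distrib]
    refine prod_congr rfl fun j _ => ?_
    rw [Lagrange.basisDivisor, map_neg, sub_neg_eq_add, sub_neg_eq_add, neg_add_eq_sub]
  rw [← sub_eq_iff_eq_add']
  refine (Lagrange.eq_interpolate hinj (by
    simpa only [card_univ] using degree_X_pow_sub_X_sub_C_sum_mul_prod_lt μ)).trans ?_
  rw [Lagrange.interpolate_apply]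
  exact sum_congr rfl fun i _ => by rw [hR, hbasis, ← mul_assoc, ← C_mul, div_eq_mul_inv]

theorem X_sub_C_pow_card_succ_eq_of_injective (c : K) {b : ι → K} (hb : Function.Injective b) :
    (X - C c) ^ (Fintype.card ι + 1) = (X - C (c + ∑ j, (c + b j))) * ∏ j, (X + C (b j)) +
      ∑ i, C ((-(c + b i)) ^ (Fintype.card ι + 1) / ∏ j ∈ univ.erase i, (b j - b i)) *
        ∏ j ∈ univ.erase i, (X + C (b j)) := by
  have h := congrArg (comp · (X - C c))
    (X_pow_card_succ_eq_of_injective (μ := fun j => c + b j) ((add_right_injective c).comp hb))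
  have hX : ∀ j, X - C c + C (c + b j) = X + C (b j) := fun j => by rw [C_add]; ring
  have hs : X - C c - C (∑ j, (c + b j)) = X - C (c + ∑ j, (c + b j)) := by rw [C_add]; ring
  simpa only [add_comp, mul_comp, sub_comp, pow_comp, X_comp, C_comp, prod_comp, sum_comp,
    add_sub_add_left_eq_sub, hX, hs] using h

end Polynomial

theorem Complex.arg_pos_of_im_pos {z : ℂ} (hz : 0 < z.im) : 0 < z.arg :=
  (arg_nonneg_iff.2 hz.le).lt_of_ne fun h => hz.ne' (arg_eq_zero_iff.1 h.symm).2

theorem Complex.ne_zero_of_im_pos {z : ℂ} (hz : 0 < z.im) : z ≠ 0 :=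
  fun h => hz.ne' (by rw [h, zero_im])

section Prop3

variable {n : ℕ} {ξ₀ : ℂ}

theorem omegaProp3_mem_Ioo (hξ : 0 < ξ₀.im) (j : Fin n) : omegaProp3 n ξ₀ j ∈ Set.Ioo 0 π := by
  have harg₀ := Complex.arg_pos_of_im_pos hξ
  have hargπ := Complex.arg_lt_pi_iff.2 (Or.inr hξ.ne')
  have hj : (j : ℝ) + 1 ≤ n := by exact_mod_cast j.isLt
  constructor
  · unfold omegaProp3; positivity
  · rw [omegaProp3, div_lt_iff₀ (by positivity)]
    nlinarith [Real.pi_pos]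

theorem sin_omegaProp3_pos (hξ : 0 < ξ₀.im) (j : Fin n) : 0 < Real.sin (omegaProp3 n ξ₀ j) :=
  Real.sin_pos_of_pos_of_lt_pi (omegaProp3_mem_Ioo hξ j).1 (omegaProp3_mem_Ioo hξ j).2

theorem omegaProp3_sub (i j : Fin n) :
    omegaProp3 n ξ₀ i - omegaProp3 n ξ₀ j = ((i : ℝ) - j) * π / (n + 1) := by
  unfold omegaProp3
  ring

theorem sin_sub_mul_pi_div_pos {i j : Fin n} (h : j < i) :
    0 < Real.sin (((i : ℝ) - j) * π / (n + 1)) := by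
  have hij : (j : ℝ) + 1 ≤ i := by exact_mod_cast h
  have hi : (i : ℝ) + 1 ≤ n := by exact_mod_cast i.isLt
  apply Real.sin_pos_of_pos_of_lt_pi
  · have : (0 : ℝ) < i - j := by linarith
    positivity
  · rw [div_lt_iff₀ (by positivity)]
    nlinarith [Real.pi_pos, (Nat.cast_nonneg j : (0 : ℝ) ≤ j)]

theorem sin_sub_mul_pi_div_eq {i j : Fin n} (h : j ≠ i) :
    Real.sin (((i : ℝ) - j) * π / (n + 1)) =
      (if i < j then -1 else 1) * |Real.sin (((j : ℝ) - i) * π / (n + 1))| := by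
  have hneg : ((j : ℝ) - i) * π / (n + 1) = -(((i : ℝ) - j) * π / (n + 1)) := by ring
  rcases h.lt_or_gt with hji | hij
  · rw [if_neg hji.asymm, hneg, Real.sin_neg, abs_neg, abs_of_pos (sin_sub_mul_pi_div_pos hji),
      one_mul]
  · rw [if_pos hij, abs_of_pos (sin_sub_mul_pi_div_pos hij), ← neg_neg (((i : ℝ) - j) * π / _),
      ← hneg, Real.sin_neg]
    ring

theorem sin_sub_mul_pi_div_ne_zero {i j : Fin n} (h : j ≠ i) :
    Real.sin (((i : ℝ) - j) * π / (n + 1)) ≠ 0 := by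
  rcases h.lt_or_gt with hji | hij
  · exact (sin_sub_mul_pi_div_pos hji).ne'
  · rw [show ((i : ℝ) - j) * π / (n + 1) = -(((j : ℝ) - i) * π / (n + 1)) by ring, Real.sin_neg]
    exact neg_ne_zero.2 (sin_sub_mul_pi_div_pos hij).ne'

theorem bProp3_sub (hξ : 0 < ξ₀.im) (i j : Fin n) :
    bProp3 n ξ₀ j - bProp3 n ξ₀ i = 2 * ξ₀.im / (n + 1) * Real.sin (((i : ℝ) - j) * π / (n + 1)) /
      (Real.sin (omegaProp3 n ξ₀ i) * Real.sin (omegaProp3 n ξ₀ j)) := by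
  have hi := (sin_omegaProp3_pos hξ i).ne'
  have hj := (sin_omegaProp3_pos hξ j).ne'
  rw [← omegaProp3_sub, Real.sin_sub, bProp3, bProp3]
  field_simp
  ring

theorem bProp3_injective (hξ : 0 < ξ₀.im) : Function.Injective (bProp3 n ξ₀) := by
  intro i j hij
  by_contra hne
  have h := bProp3_sub hξ j i
  rw [hij, sub_self, eq_comm] at h
  refine div_ne_zero (mul_ne_zero ?_ (sin_sub_mul_pi_div_ne_zero hne)) ?_ h
  · have := sin_omegaProp3_pos hξ i
    positivity
  · exact mul_ne_zero (sin_omegaProp3_pos hξ j).ne' (sin_omegaProp3_pos hξ i).ne'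

theorem prod_bProp3_sub (hξ : 0 < ξ₀.im) (i : Fin n) :
    ∏ j ∈ univ.erase i, (bProp3 n ξ₀ j - bProp3 n ξ₀ i) =
      (-1) ^ (n - 1 - i) * (2 * ξ₀.im / (n + 1) / Real.sin (omegaProp3 n ξ₀ i)) ^ (n - 1) /
        ∏ j ∈ univ.erase i,
          (Real.sin (omegaProp3 n ξ₀ j) / |Real.sin (((j : ℝ) - i) * π / (n + 1))|) := by
  have hfactor : ∀ j ∈ univ.erase i, bProp3 n ξ₀ j - bProp3 n ξ₀ i =
      (if i < j then -1 else 1) * (2 * ξ₀.im / (n + 1) / Real.sin (omegaProp3 n ξ₀ i)) /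
        (Real.sin (omegaProp3 n ξ₀ j) / |Real.sin (((j : ℝ) - i) * π / (n + 1))|) := by
    intro j hj
    have hji := (mem_erase.1 hj).1
    have := abs_pos.2 (sin_sub_mul_pi_div_ne_zero hji.symm)
    have := (sin_omegaProp3_pos hξ i).ne'
    have := (sin_omegaProp3_pos hξ j).ne'
    rw [bProp3_sub hξ, sin_sub_mul_pi_div_eq hji]
    field_simp
  have hsign : ∏ j ∈ univ.erase i, (if i < j then (-1 : ℝ) else 1) = (-1) ^ (n - 1 - i) := by
    rw [prod_ite, prod_const_one, mul_one, prod_const, ← Fin.card_Ioi]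
    congr 2
    ext j
    simpa using fun h : i < j => h.ne'
  rw [prod_congr rfl hfactor, prod_div_distrib, prod_mul_distrib, hsign, prod_const,
    card_erase_of_mem (mem_univ i), card_univ, Fintype.card_fin]

theorem aProp3_sq (hξ : 0 < ξ₀.im) (i : Fin n) :
    aProp3 n ξ₀ i ^ 2 = (2 * ξ₀.im / (n + 1) / Real.sin (omegaProp3 n ξ₀ i)) ^ 2 / ‖ξ₀‖ *
      ∏ j ∈ univ.erase i,
        (Real.sin (omegaProp3 n ξ₀ j) / |Real.sin (((j : ℝ) - i) * π / (n + 1))|) := by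
  have hsqrt (j : Fin n) := Real.sq_sqrt (div_nonneg (sin_omegaProp3_pos hξ j).le
    (abs_nonneg (Real.sin (((j : ℝ) - i) * π / (n + 1)))))
  rw [aProp3, mul_pow, ← prod_pow, prod_congr rfl fun j _ => hsqrt j, div_pow,
    mul_pow ((n : ℝ) + 1), Real.sq_sqrt (norm_nonneg ξ₀)]
  congr 1
  field_simp

theorem chi0Prop3_add_bProp3 (j : Fin n) :
    chi0Prop3 n ξ₀ + bProp3 n ξ₀ j = ((2 * ξ₀.im / (n + 1) : ℝ) : ℂ) *
      ((Real.cos (omegaProp3 n ξ₀ j) / Real.sin (omegaProp3 n ξ₀ j) : ℝ) + Complex.I) := by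
  unfold chi0Prop3 bProp3
  push_cast
  ring

theorem chi0Prop3_add_sum : chi0Prop3 n ξ₀ + ∑ j, (chi0Prop3 n ξ₀ + bProp3 n ξ₀ j) = 2 * ξ₀ := by
  simp only [chi0Prop3_add_bProp3, ← mul_sum, sum_add_distrib, sum_const, card_univ,
    Fintype.card_fin]
  unfold chi0Prop3
  push_cast
  field_simp
  linear_combination (n + 1) * Complex.re_add_im ξ₀

theorem chi0Prop3_add_bProp3_pow (hξ : 0 < ξ₀.im) (j : Fin n) :
    (chi0Prop3 n ξ₀ + bProp3 n ξ₀ j) ^ (n + 1) =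
      (((-1) ^ (j : ℕ) * (2 * ξ₀.im / (n + 1) / Real.sin (omegaProp3 n ξ₀ j)) ^ (n + 1) /
        ‖ξ₀‖ : ℝ) : ℂ) * ξ₀ := by
  have hs : Complex.sin (omegaProp3 n ξ₀ j) ≠ 0 := by
    exact_mod_cast (sin_omegaProp3_pos hξ j).ne'
  have hnorm : (‖ξ₀‖ : ℂ) ≠ 0 := by
    exact_mod_cast norm_ne_zero_iff.2 (Complex.ne_zero_of_im_pos hξ)
  have hpolar : chi0Prop3 n ξ₀ + bProp3 n ξ₀ j = ((2 * ξ₀.im / (n + 1) /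
      Real.sin (omegaProp3 n ξ₀ j) : ℝ) : ℂ) * Complex.exp (omegaProp3 n ξ₀ j * Complex.I) := by
    rw [chi0Prop3_add_bProp3, Complex.exp_mul_I]
    push_cast
    field_simp
  have hangle : ((n + 1 : ℕ) : ℂ) * (omegaProp3 n ξ₀ j * Complex.I) =
      (j : ℕ) * (π * Complex.I) + ξ₀.arg * Complex.I := by
    rw [omegaProp3]
    push_cast
    field_simp
  have harg : Complex.exp (ξ₀.arg * Complex.I) = ξ₀ / ‖ξ₀‖ := by
    rw [eq_div_iff hnorm, mul_comm, Complex.norm_mul_exp_arg_mul_I]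
  rw [hpolar, mul_pow, ← Complex.exp_nat_mul, hangle, Complex.exp_add, Complex.exp_nat_mul,
    Complex.exp_pi_mul_I, harg]
  push_cast
  ring

theorem neg_chi0Prop3_add_bProp3_pow_div_prod (hξ : 0 < ξ₀.im) (i : Fin n) :
    (-(chi0Prop3 n ξ₀ + bProp3 n ξ₀ i)) ^ (n + 1) /
        ∏ j ∈ univ.erase i, ((bProp3 n ξ₀ j : ℂ) - bProp3 n ξ₀ i) =
      ξ₀ * (aProp3 n ξ₀ i : ℂ) ^ 2 := by
  have hprod : ∏ j ∈ univ.erase i, ((bProp3 n ξ₀ j : ℂ) - bProp3 n ξ₀ i) =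
      ((∏ j ∈ univ.erase i, (bProp3 n ξ₀ j - bProp3 n ξ₀ i) : ℝ) : ℂ) := by
    push_cast
    rfl
  rw [neg_pow, chi0Prop3_add_bProp3_pow hξ, hprod, prod_bProp3_sub hξ, ← Complex.ofReal_pow,
    aProp3_sq hξ]
  set x := 2 * ξ₀.im / (n + 1) / Real.sin (omegaProp3 n ξ₀ i)
  set P := ∏ j ∈ univ.erase i,
    (Real.sin (omegaProp3 n ξ₀ j) / |Real.sin (((j : ℝ) - i) * π / (n + 1))|)
  have hx : (x : ℂ) ≠ 0 := Complex.ofReal_ne_zero.2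
    (div_pos (by positivity) (sin_omegaProp3_pos hξ i)).ne'
  have hP : (P : ℂ) ≠ 0 := Complex.ofReal_ne_zero.2 (prod_pos fun j hj =>
    div_pos (sin_omegaProp3_pos hξ j)
      (abs_pos.2 (sin_sub_mul_pi_div_ne_zero (mem_erase.1 hj).1.symm))).ne'
  have hnorm : (‖ξ₀‖ : ℂ) ≠ 0 := by
    exact_mod_cast norm_ne_zero_iff.2 (Complex.ne_zero_of_im_pos hξ)
  have hi := i.isLt
  have hsign : (-1 : ℂ) ^ (n + 1) * (-1) ^ (i : ℕ) = (-1) ^ (n - 1 - i) := by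
    rw [← pow_add, show n + 1 + i = n - 1 - i + 2 * (i + 1) by omega, pow_add, pow_mul]
    norm_num
  have hpow : (x : ℂ) ^ (n + 1) = x ^ (n - 1) * x ^ 2 := by
    rw [← pow_add, show n - 1 + 2 = n + 1 by omega]
  push_cast
  rw [hpow]
  field_simp
  linear_combination ξ₀ * hsign

end Prop3

open Polynomial in
theorem Dpoly_maximal_multiple_root (n : ℕ) (ξ₀ : ℂ)
    (him : 0 < ξ₀.im) :
    Dpoly n ξ₀ (aProp3 n ξ₀) (bProp3 n ξ₀) = (X - C (chi0Prop3 n ξ₀)) ^ (n + 1) := by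
  have h := X_sub_C_pow_card_succ_eq_of_injective (chi0Prop3 n ξ₀)
    (Complex.ofReal_injective.comp (bProp3_injective (n := n) him))
  simp only [Fintype.card_fin, Function.comp_apply, chi0Prop3_add_sum,
    neg_chi0Prop3_add_bProp3_pow_div_prod him] at h
  rw [h, Dpoly, mul_sum]
  simp only [C_mul, mul_assoc]
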